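/- Let D ≥ 1, n ≥ 3, and let T : (Fin n → Fin D × Fin D) → ℝ be a pair tensor with within-pair symmetry, slot-exchange symmetry, and satisfying the cyclic identity. Then every component of T of the form F₂ vanishes: for any slot assignment P : Fin n → Fin D × Fin D and pairwise distinct slots k, l, m such that P k = (a,b), P l = (a,c), P m = (a,d) for some common a and some b, c, d ∈ Fin D, we have T P = 0. -/

import Mathlib

/-- A pair tensor has within-pair symmetry if its value is unchanged when the
two entries of any single pair-slot are swapped. -/
def WithinPairSymm {n D : ℕ} (T : (Fin n → Fin D × Fin D) → ℝ) : Prop :=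
  ∀ (P : Fin n → Fin D × Fin D) (k : Fin n),
    T (Function.update P k ((P k).2, (P k).1)) = T P

/-- A pair tensor has slot-exchange symmetry if its value is unchanged under
precomposition with any permutation of the slots. -/
def SlotExchangeSymm {n D : ℕ} (T : (Fin n → Fin D × Fin D) → ℝ) : Prop :=
  ∀ (P : Fin n → Fin D × Fin D) (σ : Equiv.Perm (Fin n)), T (P ∘ σ) = T P

/-- A pair tensor satisfies the cyclic identity if for any two distinct slots,
any fixed assignment of the remaining slots, and any indices `a b c d`, the
cyclic sum of its components vanishes. -/
def CyclicIdentity {n D : ℕ} (T : (Fin n → Fin D × Fin D) → ℝ) : Prop :=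
  ∀ (P : Fin n → Fin D × Fin D) (k l : Fin n), k ≠ l →
    ∀ a b c d : Fin D,
      T (Function.update (Function.update P k (a, b)) l (c, d)) +
      T (Function.update (Function.update P k (a, c)) l (d, b)) +
      T (Function.update (Function.update P k (a, d)) l (b, c)) = 0


/-!
Two applications of the cyclic identity. On slots `k, l` of `P`, with indices `a b a c`, the
term with pairs `(a,c), (b,a)` is `T P` again by the two symmetries, so `2 T P + T G = 0`, where `G`
has pairs `(a,a), (c,b)` at `k, l` and still `(a,d)` at `m`. On slots `k, m` of `G`, with indices
`a a a d`, all three terms equal `T G`, so `T G = 0`.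
-/

open Function

theorem Function.update_update_comp_swap {α β : Type*} [DecidableEq α] (f : α → β) {k l : α}
    (hkl : k ≠ l) (u v : β) :
    update (update f k u) l v ∘ Equiv.swap k l = update (update f k v) l u := by
  funext x
  rcases eq_or_ne x k with rfl | hxk
  · simp [update_of_ne hkl]
  rcases eq_or_ne x l with rfl | hxl
  · simp [update_of_ne hkl]
  · simp [Equiv.swap_apply_of_ne_of_ne hxk hxl, update_of_ne hxk, update_of_ne hxl]

section

variable {n D : ℕ} {T : (Fin n → Fin D × Fin D) → ℝ}

theorem WithinPairSymm.apply_update_swap (hwp : WithinPairSymm T) (P : Fin n → Fin D × Fin D)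
    (k : Fin n) (x y : Fin D) : T (update P k (y, x)) = T (update P k (x, y)) := by
  simpa using hwp (update P k (x, y)) k

theorem SlotExchangeSymm.apply_update_update_comm (hse : SlotExchangeSymm T)
    (P : Fin n → Fin D × Fin D) {k l : Fin n} (hkl : k ≠ l) (u v : Fin D × Fin D) :
    T (update (update P k v) l u) = T (update (update P k u) l v) := by
  rw [← update_update_comp_swap P hkl u v]
  exact hse _ _

theorem CyclicIdentity.apply_eq_zero_of_eq_diag (hcyc : CyclicIdentity T)
    (hwp : WithinPairSymm T) (hse : SlotExchangeSymm T) {P : Fin n → Fin D × Fin D}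
    {k l : Fin n} (hkl : k ≠ l) {a d : Fin D} (hk : P k = (a, a)) (hl : P l = (a, d)) :
    T P = 0 := by
  have hP : update (update P k (a, a)) l (a, d) = P := by
    rw [← hk, update_eq_self, ← hl, update_eq_self]
  have h₂ : T (update (update P k (a, a)) l (d, a)) = T P := by
    rw [hwp.apply_update_swap, hP]
  have h₃ : T (update (update P k (a, d)) l (a, a)) = T P := by
    rw [hse.apply_update_update_comm _ hkl, hP]
  have h := hcyc P k l hkl a a a d
  rw [hP, h₂, h₃] at h
  linarith

theorem CyclicIdentity.two_mul_apply_add_apply_diag_eq_zero (hcyc : CyclicIdentity T)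
    (hwp : WithinPairSymm T) (hse : SlotExchangeSymm T) {P : Fin n → Fin D × Fin D}
    {k l : Fin n} (hkl : k ≠ l) {a b c : Fin D} (hk : P k = (a, b)) (hl : P l = (a, c)) :
    2 * T P + T (update (update P k (a, a)) l (c, b)) = 0 := by
  have hP : update (update P k (a, b)) l (a, c) = P := by
    rw [← hk, update_eq_self, ← hl, update_eq_self]
  have h₃ : T (update (update P k (a, c)) l (b, a)) = T P := by
    rw [hwp.apply_update_swap, hse.apply_update_update_comm _ hkl, hP]
  have h := hcyc P k l hkl a b a c
  rw [hP, h₃] at h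
  linarith

end

theorem stmt_5_general (D n : ℕ)
    (T : (Fin n → Fin D × Fin D) → ℝ)
    (hwp : WithinPairSymm T) (hse : SlotExchangeSymm T)
    (hcyc : CyclicIdentity T) :
    ∀ (P : Fin n → Fin D × Fin D) (k l m : Fin n),
      k ≠ l → k ≠ m → l ≠ m →
      ∀ a b c d : Fin D, P k = (a, b) → P l = (a, c) → P m = (a, d) →
      T P = 0 := by
  intro P k l m hkl hkm hlm a b c d hPk hPl hPm
  set G := update (update P k (a, a)) l (c, b)
  have hGk : G k = (a, a) := by simp [G, update_of_ne hkl]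
  have hGm : G m = (a, d) := by simp [G, update_of_ne hlm.symm, update_of_ne hkm.symm, hPm]
  have hG : T G = 0 := hcyc.apply_eq_zero_of_eq_diag hwp hse hkm hGk hGm
  have hPG := hcyc.two_mul_apply_add_apply_diag_eq_zero hwp hse hkl hPk hPl
  linarith

theorem stmt_5 (D n : ℕ) (hD : 1 ≤ D) (hn : 3 ≤ n)
    (T : (Fin n → Fin D × Fin D) → ℝ)
    (hwp : WithinPairSymm T) (hse : SlotExchangeSymm T)
    (hcyc : CyclicIdentity T) :
    ∀ (P : Fin n → Fin D × Fin D) (k l m : Fin n),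
      k ≠ l → k ≠ m → l ≠ m →
      ∀ a b c d : Fin D, P k = (a, b) → P l = (a, c) → P m = (a, d) →
      T P = 0 :=
  stmt_5_general D n T hwp hse hcyc
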